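/- Let C be a real symmetric positive definite n×n matrix with unit diagonal, b ∈ ℝⁿ, and 1 ≤ k with 2k ≤ n. Let ∅ = S₀ ⊂ S₁ ⊂ ⋯ ⊂ S_k be the Orthogonal Matching Pursuit sequence: S_{i+1} = S_i ∪ {m_i}, where m_i ∉ S_i maximizes |b_m − C_{m,S_i} (C_{S_i})⁻¹ b_{S_i}| over all m ∉ S_i (here C_{m,S} is the row vector (C_{m,j})_{j∈S}). Suppose γ > 0 with γ ≤ k is a lower bound on the submodularity ratio at S_k, i.e., for every L ⊆ S_k and every nonempty S disjoint from L with |S| ≤ k, Σ_{i∈S}(R²(L ∪ {i}) − R²(L)) ≥ γ · (R²(L ∪ S) − R²(L)). Then R²(S_k) ≥ (1 − e^{−γ·λmin(C,2k)}) · OPT, where OPT = max over subsets T of size at most k of R²(T). In particular, R²(S_k) ≥ (1 − e^{−λmin(C,2k)²}) · OPT. -/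

import Mathlib

open scoped Matrix

/-- The smallest eigenvalue of a real symmetric (Hermitian) matrix. -/
noncomputable def lambdaMin {m : Type*} [Fintype m] [DecidableEq m] (A : Matrix m m ℝ) : ℝ :=
  if hA : A.IsHermitian then ⨅ i, hA.eigenvalues i else 0

/-- The largest eigenvalue of a real symmetric (Hermitian) matrix. -/
noncomputable def lambdaMax {m : Type*} [Fintype m] [DecidableEq m] (A : Matrix m m ℝ) : ℝ :=
  if hA : A.IsHermitian then ⨆ i, hA.eigenvalues i else 0

/-- The principal submatrix of `C` on rows and columns in `S`. -/
def subMat {ι : Type*} (C : Matrix ι ι ℝ) (S : Finset ι) : Matrix S S ℝ :=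
  fun i j => C i j

/-- `R²(S) = b_Sᵀ (C_S)⁻¹ b_S`, the squared multiple correlation. -/
noncomputable def R2 {ι : Type*} [Fintype ι] [DecidableEq ι]
    (C : Matrix ι ι ℝ) (b : ι → ℝ) (S : Finset ι) : ℝ :=
  (fun i : S => b i) ⬝ᵥ (subMat C S)⁻¹ *ᵥ (fun i : S => b i)

/-- `λmin(C,k)`: the smallest eigenvalue of any `k × k` principal submatrix of `C`. -/
noncomputable def lambdaMinK {n : ℕ} (C : Matrix (Fin n) (Fin n) ℝ) (k : ℕ) : ℝ :=
  sInf {x | ∃ S : Finset (Fin n), S.card = k ∧ x = lambdaMin (subMat C S)}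

/-- `λmax(C,k)`: the largest eigenvalue of any `k × k` principal submatrix of `C`. -/
noncomputable def lambdaMaxK {n : ℕ} (C : Matrix (Fin n) (Fin n) ℝ) (k : ℕ) : ℝ :=
  sSup {x | ∃ S : Finset (Fin n), S.card = k ∧ x = lambdaMax (subMat C S)}

/-- `Cov(Res(Z|S), X_m) = b_m - C_{m,S} (C_S)⁻¹ b_S`. -/
noncomputable def resCov {ι : Type*} [Fintype ι] [DecidableEq ι]
    (C : Matrix ι ι ℝ) (b : ι → ℝ) (S : Finset ι) (m : ι) : ℝ :=
  b m - (fun i : S => C m i) ⬝ᵥ ((subMat C S)⁻¹ *ᵥ (fun i : S => b i))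

/-!
`R²(S)` is the maximum of the fit gain `2 bᵀx - xᵀCx` over vectors `x` supported on `S`,
attained at the regression coefficients. With unit diagonal, adding a coordinate `i` to `L`
raises `R²` by at least the squared residual covariance `r_i²`; by the restricted eigenvalue
bound `μ = λmin(C, 2k)`, adding a set `T` with `|L ∪ T| ≤ 2k` raises it by at most
`∑_{i ∈ T} r_i² / μ`. As OMP picks the largest `|r_i|`, every step closes a fraction `c / k`
of the gap to `OPT`, with `c = γμ` (via the submodularity ratio and single-element gains) or
`c = μ` (directly), and `(1 - c/k)^k ≤ e^{-c}`. Finally `μ ≤ 1` gives `e^{-μ} ≤ e^{-μ²}`.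
-/

open Matrix Finset

section Eigenvalues

variable {m : Type*} [Fintype m] [DecidableEq m] {A : Matrix m m ℝ}

lemma lambdaMin_le_eigenvalues (hA : A.IsHermitian) (i : m) : lambdaMin A ≤ hA.eigenvalues i := by
  rw [lambdaMin, dif_pos hA]
  exact ciInf_le (Set.finite_range _).bddBelow i

lemma lambdaMin_pos [Nonempty m] (hA : A.PosDef) : 0 < lambdaMin A := by
  obtain ⟨i, hi⟩ := exists_eq_ciInf_of_finite (f := hA.isHermitian.eigenvalues)
  rw [lambdaMin, dif_pos hA.isHermitian, ← hi]
  exact hA.eigenvalues_pos i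

lemma lambdaMin_mul_dotProduct_self_le (hA : A.IsHermitian) (x : m → ℝ) :
    lambdaMin A * (x ⬝ᵥ x) ≤ x ⬝ᵥ (A *ᵥ x) := by
  have hshift : (A - algebraMap ℝ _ (lambdaMin A)).PosSemidef := by
    refine posSemidef_iff_isHermitian_and_spectrum_nonneg.mpr
      ⟨hA.sub (isHermitian_diagonal _), ?_⟩
    rw [← spectrum.sub_singleton_eq, hA.spectrum_real_eq_range_eigenvalues]
    rintro _ ⟨_, ⟨i, rfl⟩, _, rfl, rfl⟩
    exact sub_nonneg.mpr (lambdaMin_le_eigenvalues hA i)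
  have := hshift.dotProduct_mulVec_nonneg x
  simp only [star_trivial, Algebra.algebraMap_eq_smul_one, sub_mulVec, smul_mulVec, one_mulVec,
    dotProduct_sub, dotProduct_smul, smul_eq_mul] at this
  linarith

lemma lambdaMin_le_diag (hA : A.IsHermitian) (i : m) : lambdaMin A ≤ A i i := by
  simpa using lambdaMin_mul_dotProduct_self_le hA (Pi.single i 1)

end Eigenvalues

section Regression

variable {ι : Type*} (C : Matrix ι ι ℝ) (b : ι → ℝ)

lemma subMat_posDef (hC : C.PosDef) (S : Finset ι) : (subMat C S).PosDef :=
  hC.submatrix Subtype.val_injective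

section

variable [Fintype ι]

def fitGain (x : ι → ℝ) : ℝ := 2 * (b ⬝ᵥ x) - x ⬝ᵥ (C *ᵥ x)

lemma fitGain_add (hC : C.IsHermitian) (x w : ι → ℝ) :
    fitGain C b (x + w) = fitGain C b x + 2 * (w ⬝ᵥ (b - C *ᵥ x)) - w ⬝ᵥ (C *ᵥ w) := by
  have hsymm : w ⬝ᵥ (C *ᵥ x) = x ⬝ᵥ (C *ᵥ w) := by
    rw [dotProduct_mulVec, ← mulVec_transpose, ← conjTranspose_eq_transpose_of_trivial, hC.eq,
      dotProduct_comm]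
  simp only [fitGain, dotProduct_add, mulVec_add, add_dotProduct, dotProduct_sub, hsymm,
    dotProduct_comm w b]
  ring

end

variable [DecidableEq ι]

def extendByZero (S : Finset ι) (y : S → ℝ) : ι → ℝ :=
  fun j => if h : j ∈ S then y ⟨j, h⟩ else 0

lemma extendByZero_coe {S : Finset ι} (y : S → ℝ) (i : S) : extendByZero S y i = y i :=
  dif_pos i.2

lemma extendByZero_restrict {S : Finset ι} {x : ι → ℝ} (hx : ∀ j ∉ S, x j = 0) :
    extendByZero S (fun i : S => x i) = x := by
  funext j
  by_cases hj : j ∈ S <;> simp [extendByZero, hj, hx]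

lemma subMat_mulVec_inv_mulVec (hC : C.PosDef) (S : Finset ι) (u : S → ℝ) :
    subMat C S *ᵥ ((subMat C S)⁻¹ *ᵥ u) = u := by
  rw [mulVec_mulVec, mul_nonsing_inv _ ((subMat_posDef C hC S).isUnit.map detMonoidHom),
    one_mulVec]

noncomputable def regCoef (S : Finset ι) : ι → ℝ :=
  extendByZero S ((subMat C S)⁻¹ *ᵥ fun i : S => b i)

lemma regCoef_apply_of_notMem {S : Finset ι} {j : ι} (hj : j ∉ S) : regCoef C b S j = 0 :=
  dif_neg hj

variable [Fintype ι]

lemma dotProduct_extendByZero (S : Finset ι) (f : ι → ℝ) (y : S → ℝ) :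
    f ⬝ᵥ extendByZero S y = (fun i : S => f i) ⬝ᵥ y := by
  rw [dotProduct, ← sum_subset (subset_univ S) (fun j _ hj => by simp [extendByZero, hj]),
    ← sum_coe_sort S]
  simp [dotProduct, extendByZero]

lemma extendByZero_dotProduct_mulVec (S : Finset ι) (x y : S → ℝ) :
    extendByZero S x ⬝ᵥ (C *ᵥ extendByZero S y) = x ⬝ᵥ (subMat C S *ᵥ y) := by
  rw [dotProduct_comm, dotProduct_extendByZero, dotProduct_comm]
  congr 1
  funext i
  exact dotProduct_extendByZero S (fun j => C i j) y

lemma resCov_eq (S : Finset ι) (j : ι) : resCov C b S j = (b - C *ᵥ regCoef C b S) j := by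
  rw [resCov, regCoef, Pi.sub_apply, mulVec, dotProduct_extendByZero]

lemma resCov_eq_zero_of_mem (hC : C.PosDef) {S : Finset ι} {j : ι} (hj : j ∈ S) :
    resCov C b S j = 0 := by
  rw [resCov, sub_eq_zero]
  exact (congrFun (subMat_mulVec_inv_mulVec C hC S fun i : S => b i) ⟨j, hj⟩).symm

lemma fitGain_regCoef (hC : C.PosDef) (S : Finset ι) :
    fitGain C b (regCoef C b S) = R2 C b S := by
  rw [fitGain, regCoef, dotProduct_extendByZero, extendByZero_dotProduct_mulVec,
    subMat_mulVec_inv_mulVec C hC, R2, dotProduct_comm _ (fun i : S => b i)]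
  ring

lemma dotProduct_residual_eq_sum (hC : C.PosDef) {L T : Finset ι} {w : ι → ℝ}
    (hw : ∀ j ∉ L ∪ T, w j = 0) :
    w ⬝ᵥ (b - C *ᵥ regCoef C b L) = ∑ j ∈ T, w j * resCov C b L j := by
  rw [dotProduct, ← sum_subset (subset_univ T)]
  · exact sum_congr rfl fun j _ => by rw [resCov_eq]
  · intro j _ hjT
    by_cases hjL : j ∈ L
    · rw [← resCov_eq, resCov_eq_zero_of_mem C b hC hjL, mul_zero]
    · rw [hw j (by simp [hjL, hjT]), zero_mul]

lemma fitGain_regCoef_add (hC : C.PosDef) (S : Finset ι) (w : ι → ℝ) :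
    fitGain C b (regCoef C b S + w) =
      R2 C b S + 2 * (w ⬝ᵥ (b - C *ᵥ regCoef C b S)) - w ⬝ᵥ (C *ᵥ w) := by
  rw [fitGain_add C b hC.isHermitian, fitGain_regCoef C b hC]

lemma fitGain_le_R2 (hC : C.PosDef) {S : Finset ι} {x : ι → ℝ} (hx : ∀ j ∉ S, x j = 0) :
    fitGain C b x ≤ R2 C b S := by
  have hcross : (x - regCoef C b S) ⬝ᵥ (b - C *ᵥ regCoef C b S) = 0 := by
    rw [dotProduct_residual_eq_sum C b hC (T := ∅) (by simp_all [regCoef_apply_of_notMem]),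
      sum_empty]
  have hquad := hC.posSemidef.dotProduct_mulVec_nonneg (x - regCoef C b S)
  have := fitGain_regCoef_add C b hC S (x - regCoef C b S)
  rw [add_sub_cancel, hcross] at this
  rw [star_trivial] at hquad
  linarith

lemma R2_mono (hC : C.PosDef) {S T : Finset ι} (hST : S ⊆ T) : R2 C b S ≤ R2 C b T := by
  rw [← fitGain_regCoef C b hC S]
  exact fitGain_le_R2 C b hC fun j hj => regCoef_apply_of_notMem C b fun h => hj (hST h)

lemma R2_empty : R2 C b ∅ = 0 := by
  simp [R2, dotProduct]

lemma R2_nonneg (hC : C.PosDef) (S : Finset ι) : 0 ≤ R2 C b S :=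
  R2_empty C b ▸ R2_mono C b hC (empty_subset S)

lemma R2_add_sq_resCov_le (hC : C.PosDef) (L : Finset ι) {i : ι} (hi : C i i = 1) :
    R2 C b L + resCov C b L i ^ 2 ≤ R2 C b (insert i L) := by
  have := fitGain_le_R2 C b hC (S := insert i L)
    (x := regCoef C b L + Pi.single i (resCov C b L i)) (fun j hj => by
      rw [mem_insert, not_or] at hj
      simp [regCoef_apply_of_notMem C b hj.2, hj.1])
  rw [fitGain_regCoef_add C b hC, single_dotProduct, mulVec_single, single_dotProduct] at this
  simp only [← resCov_eq, Pi.smul_apply, op_smul_eq_mul, col_apply, hi] at this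
  nlinarith

lemma R2_union_le (hC : C.PosDef) {L T : Finset ι} {μ : ℝ} (hμ : 0 < μ)
    (hquad : ∀ x : ι → ℝ, (∀ j ∉ L ∪ T, x j = 0) →
      μ * (x ⬝ᵥ x) ≤ x ⬝ᵥ (C *ᵥ x)) :
    μ * (R2 C b (L ∪ T) - R2 C b L) ≤ ∑ i ∈ T, resCov C b L i ^ 2 := by
  set z := regCoef C b (L ∪ T) - regCoef C b L
  have hz : ∀ j ∉ L ∪ T, z j = 0 := fun j hj => by
    simp [z, regCoef_apply_of_notMem C b hj,
      regCoef_apply_of_notMem C b fun h => hj (mem_union_left T h)]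
  have hexp := fitGain_regCoef_add C b hC L z
  rw [add_sub_cancel, fitGain_regCoef C b hC, dotProduct_residual_eq_sum C b hC hz] at hexp
  have hTz : ∑ j ∈ T, z j ^ 2 ≤ z ⬝ᵥ z := by
    simpa only [dotProduct, sq] using
      sum_le_sum_of_subset_of_nonneg (subset_univ T) fun j _ _ => mul_self_nonneg (z j)
  have hquadz := hquad z hz
  calc μ * (R2 C b (L ∪ T) - R2 C b L)
      ≤ ∑ j ∈ T, (2 * μ * (z j * resCov C b L j) - μ ^ 2 * z j ^ 2) := by
        rw [sum_sub_distrib, ← mul_sum, ← mul_sum]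
        nlinarith
    _ ≤ ∑ j ∈ T, resCov C b L j ^ 2 :=
        sum_le_sum fun j _ => by nlinarith [sq_nonneg (resCov C b L j - μ * z j)]

end Regression

section LambdaMinK

variable {n : ℕ} (C : Matrix (Fin n) (Fin n) ℝ) {s : ℕ}

lemma finite_setOf_lambdaMin_subMat :
    {x | ∃ S : Finset (Fin n), S.card = s ∧ x = lambdaMin (subMat C S)}.Finite :=
  (Set.finite_range fun S : Finset (Fin n) => lambdaMin (subMat C S)).subset
    (by rintro _ ⟨S, -, rfl⟩; exact ⟨S, rfl⟩)

lemma lambdaMinK_le {S : Finset (Fin n)} (hS : S.card = s) :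
    lambdaMinK C s ≤ lambdaMin (subMat C S) :=
  csInf_le (finite_setOf_lambdaMin_subMat C).bddBelow ⟨S, hS, rfl⟩

lemma exists_lambdaMinK_eq (hs : s ≤ n) :
    ∃ S : Finset (Fin n), S.card = s ∧ lambdaMinK C s = lambdaMin (subMat C S) := by
  obtain ⟨S, -, hS⟩ :=
    exists_superset_card_eq (s := (∅ : Finset (Fin n))) (n := s) (by simp) (by simpa using hs)
  exact Set.Nonempty.csInf_mem (s := {x | ∃ S : Finset (Fin n), S.card = s ∧
    x = lambdaMin (subMat C S)}) ⟨_, S, hS, rfl⟩ (finite_setOf_lambdaMin_subMat C)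

lemma lambdaMinK_pos (hC : C.PosDef) (hs0 : 0 < s) (hs : s ≤ n) : 0 < lambdaMinK C s := by
  obtain ⟨S, hS, heq⟩ := exists_lambdaMinK_eq C hs
  have : Nonempty S := (card_pos.mp (hS ▸ hs0)).coe_sort
  exact heq ▸ lambdaMin_pos (subMat_posDef C hC S)

lemma lambdaMinK_le_one (hC : C.IsHermitian) (hdiag : ∀ i, C i i = 1) (hs0 : 0 < s)
    (hs : s ≤ n) : lambdaMinK C s ≤ 1 := by
  obtain ⟨S, hS, heq⟩ := exists_lambdaMinK_eq C hs
  obtain ⟨i, hi⟩ := card_pos.mp (hS ▸ hs0)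
  rw [heq, ← hdiag i]
  exact lambdaMin_le_diag (A := subMat C S) (hC.submatrix _) ⟨i, hi⟩

lemma lambdaMinK_mul_dotProduct_self_le (hC : C.IsHermitian) (hs : s ≤ n)
    {T : Finset (Fin n)} (hT : T.card ≤ s) {x : Fin n → ℝ} (hx : ∀ j ∉ T, x j = 0) :
    lambdaMinK C s * (x ⬝ᵥ x) ≤ x ⬝ᵥ (C *ᵥ x) := by
  obtain ⟨S, hTS, hS⟩ := exists_superset_card_eq hT (by simpa using hs)
  obtain ⟨y, rfl⟩ : ∃ y, extendByZero S y = x :=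
    ⟨_, extendByZero_restrict fun j hj => hx j fun h => hj (hTS h)⟩
  rw [extendByZero_dotProduct_mulVec, dotProduct_extendByZero]
  simp only [extendByZero_coe]
  have hy : 0 ≤ y ⬝ᵥ y := by simpa using dotProduct_self_star_nonneg y
  exact (mul_le_mul_of_nonneg_right (lambdaMinK_le C hS) hy).trans
    (lambdaMin_mul_dotProduct_self_le (hC.submatrix _) y)

lemma R2_union_le_lambdaMinK (b : Fin n → ℝ) (hC : C.PosDef) (hs0 : 0 < s) (hs : s ≤ n)
    {L T : Finset (Fin n)} (hLT : (L ∪ T).card ≤ s) :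
    lambdaMinK C s * (R2 C b (L ∪ T) - R2 C b L) ≤ ∑ i ∈ T, resCov C b L i ^ 2 :=
  R2_union_le C b hC (lambdaMinK_pos C hC hs0 hs) fun _ hx =>
    lambdaMinK_mul_dotProduct_self_le C hC.isHermitian hs hLT hx

end LambdaMinK

lemma sub_le_exp_neg_mul_sub_of_step {a : ℕ → ℝ} {M c : ℝ} {k : ℕ} (hk : 0 < k)
    (hck : c ≤ k) (ha0 : a 0 ≤ M) (hstep : ∀ j < k, c * (M - a j) ≤ k * (a (j + 1) - a j)) :
    M - a k ≤ Real.exp (-c) * (M - a 0) := by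
  have hk' : (0 : ℝ) < k := by exact_mod_cast hk
  have hq : 0 ≤ 1 - c / k := sub_nonneg.mpr ((div_le_one hk').mpr hck)
  have hdecay : ∀ j ≤ k, M - a j ≤ (1 - c / k) ^ j * (M - a 0) := by
    intro j
    induction j with
    | zero => simp
    | succ j ih =>
      intro hj
      have hcontract : M - a (j + 1) ≤ (1 - c / k) * (M - a j) := by
        have := hstep j hj
        rw [sub_mul, one_mul, div_mul_eq_mul_div, le_sub_iff_add_le, ← le_sub_iff_add_le',
          div_le_iff₀ hk']
        linarith
      calc M - a (j + 1) ≤ (1 - c / k) * (M - a j) := hcontract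
        _ ≤ (1 - c / k) * ((1 - c / k) ^ j * (M - a 0)) :=
          mul_le_mul_of_nonneg_left (ih (by omega)) hq
        _ = (1 - c / k) ^ (j + 1) * (M - a 0) := by ring
  exact (hdecay k le_rfl).trans
    (mul_le_mul_of_nonneg_right (Real.one_sub_div_pow_le_exp_neg hck) (sub_nonneg.mpr ha0))

section OrthogonalMatchingPursuit

variable {ι : Type*} [Fintype ι] [DecidableEq ι] (C : Matrix ι ι ℝ) (b : ι → ℝ)

def IsOMPPath (S : ℕ → Finset ι) (k : ℕ) : Prop :=
  ∀ i < k, ∃ m ∉ S i, S (i + 1) = insert m (S i) ∧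
    ∀ x ∉ S i, |resCov C b (S i) x| ≤ |resCov C b (S i) m|

noncomputable def optR2 (k : ℕ) : ℝ :=
  sSup {x | ∃ T : Finset ι, T.card ≤ k ∧ x = R2 C b T}

lemma exists_card_le_optR2_eq (k : ℕ) :
    ∃ T : Finset ι, T.card ≤ k ∧ optR2 C b k = R2 C b T :=
  Set.Nonempty.csSup_mem (s := {x | ∃ T : Finset ι, T.card ≤ k ∧ x = R2 C b T})
    ⟨_, ∅, by simp, rfl⟩
    ((Set.finite_range fun T : Finset ι => R2 C b T).subset
      (by rintro _ ⟨T, -, rfl⟩; exact ⟨T, rfl⟩))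

lemma optR2_nonneg (hC : C.PosDef) (k : ℕ) : 0 ≤ optR2 C b k := by
  obtain ⟨T, -, hT⟩ := exists_card_le_optR2_eq C b k
  exact hT ▸ R2_nonneg C b hC T

variable {C b} {S : ℕ → Finset ι} {k : ℕ}

namespace IsOMPPath

lemma card_eq (hS : IsOMPPath C b S k) (hS0 : S 0 = ∅) : ∀ j ≤ k, (S j).card = j := by
  intro j
  induction j with
  | zero => simp [hS0]
  | succ j ih =>
    intro hj
    obtain ⟨m, hm, hins, -⟩ := hS j (by omega)
    rw [hins, card_insert_of_notMem hm, ih (by omega)]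

lemma subset (hS : IsOMPPath C b S k) {j : ℕ} (hj : j ≤ k) : S j ⊆ S k := by
  induction k, hj using Nat.le_induction with
  | base => rfl
  | succ k _ ih =>
    obtain ⟨m, -, hins, -⟩ := hS k (by omega)
    exact (ih fun i hi => hS i (by omega)).trans (hins ▸ subset_insert m (S k))

lemma card_union_le_two_mul (hS : IsOMPPath C b S k) (hS0 : S 0 = ∅) {j : ℕ} (hj : j < k)
    {T : Finset ι} (hT : T.card ≤ k) : (S j ∪ T).card ≤ 2 * k :=
  (card_union_le _ _).trans (by rw [hS.card_eq hS0 j hj.le]; omega)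

lemma sum_sq_resCov_le (hS : IsOMPPath C b S k) (hC : C.PosDef) (hdiag : ∀ i, C i i = 1)
    {j : ℕ} (hj : j < k) {T : Finset ι} (hT : Disjoint (S j) T) :
    ∑ i ∈ T, resCov C b (S j) i ^ 2 ≤ T.card * (R2 C b (S (j + 1)) - R2 C b (S j)) := by
  obtain ⟨m, -, hins, hmax⟩ := hS j hj
  have hgain := R2_add_sq_resCov_le C b hC (S j) (hdiag m)
  rw [← hins] at hgain
  calc ∑ i ∈ T, resCov C b (S j) i ^ 2 ≤ ∑ _i ∈ T, resCov C b (S j) m ^ 2 :=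
        sum_le_sum fun i hi => sq_le_sq.mpr (hmax i (disjoint_right.mp hT hi))
    _ ≤ T.card * (R2 C b (S (j + 1)) - R2 C b (S j)) := by
        rw [sum_const, nsmul_eq_mul]
        exact mul_le_mul_of_nonneg_left (by linarith) (Nat.cast_nonneg _)

theorem one_sub_exp_neg_mul_optR2_le (hS : IsOMPPath C b S k) (hC : C.PosDef)
    (hdiag : ∀ i, C i i = 1) (hS0 : S 0 = ∅) (hk : 0 < k) {c : ℝ} (hc : 0 ≤ c)
    (hck : c ≤ k)
    (hgain : ∀ j < k, ∀ T : Finset ι, Disjoint (S j) T → T.card ≤ k →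
      c * (R2 C b (S j ∪ T) - R2 C b (S j)) ≤ ∑ i ∈ T, resCov C b (S j) i ^ 2) :
    (1 - Real.exp (-c)) * optR2 C b k ≤ R2 C b (S k) := by
  obtain ⟨T, hTk, hopt⟩ := exists_card_le_optR2_eq C b k
  rw [hopt]
  have hstep : ∀ j < k, c * (R2 C b T - R2 C b (S j)) ≤
      k * (R2 C b (S (j + 1)) - R2 C b (S j)) := by
    intro j hj
    have hT' : (T \ S j).card ≤ k := (card_le_card sdiff_subset).trans hTk
    have hopt_le : R2 C b T ≤ R2 C b (S j ∪ T \ S j) := by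
      rw [union_sdiff_self_eq_union]
      exact R2_mono C b hC subset_union_right
    have hmono : R2 C b (S j) ≤ R2 C b (S (j + 1)) := by
      obtain ⟨m, -, hins, -⟩ := hS j hj
      exact R2_mono C b hC (hins ▸ subset_insert m (S j))
    calc c * (R2 C b T - R2 C b (S j))
        ≤ c * (R2 C b (S j ∪ T \ S j) - R2 C b (S j)) := by gcongr
      _ ≤ ∑ i ∈ T \ S j, resCov C b (S j) i ^ 2 := hgain j hj _ disjoint_sdiff hT'
      _ ≤ (T \ S j).card * (R2 C b (S (j + 1)) - R2 C b (S j)) :=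
        hS.sum_sq_resCov_le hC hdiag hj disjoint_sdiff
      _ ≤ k * (R2 C b (S (j + 1)) - R2 C b (S j)) :=
        mul_le_mul_of_nonneg_right (by exact_mod_cast hT') (sub_nonneg.mpr hmono)
  have hdecay := sub_le_exp_neg_mul_sub_of_step (a := fun j => R2 C b (S j)) hk hck
    (by simpa [hS0, R2_empty] using R2_nonneg C b hC T) hstep
  simp only [hS0, R2_empty, sub_zero] at hdecay
  linarith

end IsOMPPath

end OrthogonalMatchingPursuit

/-- Orthogonal Matching Pursuit guarantee: if `0 < γ ≤ k` is a lower bound on the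
submodularity ratio of `R²` at the selected set `S_k` with parameter `k`, then
`R²(S_k) ≥ (1 − e^{−γ·λmin(C,2k)}) · OPT`; in particular
`R²(S_k) ≥ (1 − e^{−λmin(C,2k)²}) · OPT`. -/
theorem omp_bound {n k : ℕ}
    (C : Matrix (Fin n) (Fin n) ℝ) (b : Fin n → ℝ) (hC : C.PosDef)
    (hdiag : ∀ i, C i i = 1) (hk1 : 1 ≤ k) (h2k : 2 * k ≤ n)
    (γ : ℝ) (hγ : 0 < γ) (hγk : γ ≤ k)
    (S : ℕ → Finset (Fin n)) (hS0 : S 0 = ∅)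
    (hgreedy : ∀ i < k, ∃ m ∉ S i, S (i + 1) = insert m (S i) ∧
      ∀ x ∉ S i, |resCov C b (S i) x| ≤ |resCov C b (S i) m|)
    (hsub : ∀ L T : Finset (Fin n), L ⊆ S k → Disjoint L T → T.Nonempty → T.card ≤ k →
      γ * (R2 C b (L ∪ T) - R2 C b L) ≤ ∑ i ∈ T, (R2 C b (L ∪ {i}) - R2 C b L)) :
    (1 - Real.exp (-(γ * lambdaMinK C (2 * k)))) *
        sSup {x | ∃ T : Finset (Fin n), T.card ≤ k ∧ x = R2 C b T} ≤ R2 C b (S k) ∧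
      (1 - Real.exp (-(lambdaMinK C (2 * k)) ^ 2)) *
          sSup {x | ∃ T : Finset (Fin n), T.card ≤ k ∧ x = R2 C b T} ≤ R2 C b (S k) := by
  have hS : IsOMPPath C b S k := hgreedy
  set μ := lambdaMinK C (2 * k)
  have hμ : 0 < μ := lambdaMinK_pos C hC (by omega) h2k
  have hμ1 : μ ≤ 1 := lambdaMinK_le_one C hC.isHermitian hdiag (by omega) h2k
  have hk : (1 : ℝ) ≤ k := by exact_mod_cast hk1
  have hgain : ∀ j < k, ∀ T : Finset (Fin n), T.card ≤ k →
      μ * (R2 C b (S j ∪ T) - R2 C b (S j)) ≤ ∑ i ∈ T, resCov C b (S j) i ^ 2 :=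
    fun j hj T hT =>
      R2_union_le_lambdaMinK C b hC (by omega) h2k (hS.card_union_le_two_mul hS0 hj hT)
  refine ⟨hS.one_sub_exp_neg_mul_optR2_le hC hdiag hS0 hk1 (by positivity) (by nlinarith)
    fun j hj T hST hT => ?_, ?_⟩
  · rcases T.eq_empty_or_nonempty with rfl | hne
    · simp
    calc γ * μ * (R2 C b (S j ∪ T) - R2 C b (S j))
        ≤ μ * ∑ i ∈ T, (R2 C b (S j ∪ {i}) - R2 C b (S j)) := by
          rw [mul_comm γ, mul_assoc]
          exact mul_le_mul_of_nonneg_left (hsub _ T (hS.subset hj.le) hST hne hT) hμ.le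
      _ ≤ ∑ i ∈ T, resCov C b (S j) i ^ 2 := by
          rw [mul_sum]
          refine sum_le_sum fun i _ => ?_
          simpa using hgain j hj {i} (by rw [card_singleton]; omega)
  · calc (1 - Real.exp (-μ ^ 2)) * optR2 C b k ≤ (1 - Real.exp (-μ)) * optR2 C b k := by
          gcongr
          · exact optR2_nonneg C b hC k
          · nlinarith
      _ ≤ R2 C b (S k) := hS.one_sub_exp_neg_mul_optR2_le hC hdiag hS0 hk1 hμ.le (by linarith)
          fun j hj T _ => hgain j hj T
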